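/- Let T be a finite tree of order at least 3 and T* its associated twin-free tree (obtained by deleting all but one leaf from every maximal set of pairwise twin leaves). Then T and T* have the same radius. -/

import Mathlib

/-- `f` is a dominating `k`-broadcast on `G`: each value is at most `k`, and every
vertex `u` is `f`-dominated by some vertex `v` with `f v ≥ 1` and `d(u,v) ≤ f v`. -/
def IsDomKBroadcast {V : Type*} (G : SimpleGraph V) (k : ℕ) (f : V → ℕ) : Prop :=
  (∀ v, f v ≤ k) ∧ ∀ u, ∃ v, 1 ≤ f v ∧ G.Reachable u v ∧ G.dist u v ≤ f v

/-- The dominating `k`-broadcast number: minimum cost of a dominating `k`-broadcast. -/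
noncomputable def gammaBk {V : Type*} (G : SimpleGraph V) (k : ℕ) : ℕ :=
  sInf {c : ℕ | ∃ f : V → ℕ, IsDomKBroadcast G k f ∧ ∑ᶠ v, f v = c}

/-- The radius of a graph: the minimum eccentricity of a vertex. -/
noncomputable def grad {V : Type*} (G : SimpleGraph V) : ℕ :=
  sInf {e : ℕ | ∃ v : V, ∀ u : V, G.dist v u ≤ e}

/-- A leaf is a vertex of degree one, i.e. with a unique neighbor. -/
def IsLeaf {V : Type*} (G : SimpleGraph V) (u : V) : Prop := ∃! w, G.Adj u w

/-!
An internal vertex of a path has two distinct neighbours, so no shortest path runs through a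
leaf and distances in `T[S]` are those of `T`. With at least three vertices the neighbour of a
leaf is not a leaf and is at least as central as the leaf, so both radii are attained at
non-leaves, which lie in `S`. Seen from a non-leaf, a deleted leaf is exactly as far away as
its retained twin.
-/

open SimpleGraph

section

variable {V : Type*} {G : SimpleGraph V}

lemma IsLeaf.eq_of_adj {v w y : V} (hv : IsLeaf G v) (hw : G.Adj v w) (hy : G.Adj v y) : y = w :=
  hv.unique hy hw

lemma IsLeaf.dist_eq_dist_add_one (hc : G.Connected) {v w u : V} (hv : IsLeaf G v)
    (hw : G.Adj v w) (hu : u ≠ v) : G.dist v u = G.dist w u + 1 := by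
  have hle : G.dist v u ≤ G.dist v w + G.dist w u := hc.dist_triangle
  rw [dist_eq_one_iff_adj.mpr hw] at hle
  obtain ⟨p, hp⟩ := (hc.preconnected v u).exists_walk_length_eq_dist
  cases p with
  | nil => exact absurd rfl hu
  | cons hx q =>
    cases hv.eq_of_adj hw hx
    have := dist_le q
    simp only [Walk.length_cons] at hp
    omega

lemma IsLeaf.not_isLeaf_of_adj (hc : G.Connected) (h3 : 3 ≤ ENat.card V) {v w : V}
    (hv : IsLeaf G v) (hw : G.Adj v w) : ¬ IsLeaf G w := fun hw' => by
  obtain ⟨x, hxv, hxw⟩ := ENat.exists_ne_ne_of_three_le h3 v w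
  have := hv.dist_eq_dist_add_one hc hw hxv
  have := hw'.dist_eq_dist_add_one hc hw.symm hxw
  omega

lemma IsLeaf.dist_eq_of_twin (hc : G.Connected) {u u' w c : V} (hu : IsLeaf G u)
    (hu' : IsLeaf G u') (hw : G.Adj u w) (hw' : G.Adj u' w) (hcu : c ≠ u) (hcu' : c ≠ u') :
    G.dist c u = G.dist c u' := by
  rw [dist_comm, hu.dist_eq_dist_add_one hc hw hcu, ← hu'.dist_eq_dist_add_one hc hw' hcu',
    dist_comm]

lemma IsLeaf.forall_dist_le_of_adj (hc : G.Connected) {v w : V} (hv : IsLeaf G v)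
    (hw : G.Adj v w) {A : Set V} (hwA : w ∈ A) {r : ℕ} (hr : ∀ u ∈ A, G.dist v u ≤ r) :
    ∀ u ∈ A, G.dist w u ≤ r := by
  intro u hu
  rcases eq_or_ne u v with rfl | huv
  · simpa [dist_comm, dist_eq_one_iff_adj.mpr hw] using hr w hwA
  · have := hv.dist_eq_dist_add_one hc hw huv
    have := hr u hu
    omega

lemma exists_not_isLeaf_forall_dist_le (hc : G.Connected) (h3 : 3 ≤ ENat.card V) {A : Set V}
    (hA : ∀ x, ¬ IsLeaf G x → x ∈ A) {v : V} {r : ℕ} (hr : ∀ u ∈ A, G.dist v u ≤ r) :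
    ∃ c, ¬ IsLeaf G c ∧ ∀ u ∈ A, G.dist c u ≤ r := by
  by_cases hv : IsLeaf G v
  · obtain ⟨w, hw, -⟩ := id hv
    have hw' := hv.not_isLeaf_of_adj hc h3 hw
    exact ⟨w, hw', hv.forall_dist_le_of_adj hc hw (hA w hw') hr⟩
  · exact ⟨v, hv, hr⟩

lemma SimpleGraph.Walk.IsPath.not_isLeaf_of_mem_support {a b x : V} {p : G.Walk a b}
    (hp : p.IsPath) (hx : x ∈ p.support) (hxa : x ≠ a) (hxb : x ≠ b) : ¬ IsLeaf G x := by
  intro hleaf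
  obtain ⟨i, rfl, hi⟩ := Walk.mem_support_iff_exists_getVert.mp hx
  have hi0 : i ≠ 0 := by rintro rfl; exact hxa p.getVert_zero
  have hil : i ≠ p.length := by rintro rfl; exact hxb p.getVert_length
  have hprev : G.Adj (p.getVert i) (p.getVert (i - 1)) := by
    simpa [Nat.sub_add_cancel (Nat.pos_of_ne_zero hi0)] using
      (p.adj_getVert_succ (i := i - 1) (by omega)).symm
  have hnext : G.Adj (p.getVert i) (p.getVert (i + 1)) := p.adj_getVert_succ (by omega)
  have := hp.getVert_injOn (show i - 1 ≤ p.length by omega)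
    (show i + 1 ≤ p.length by omega) (hleaf.eq_of_adj hnext hprev)
  omega

lemma dist_induce_of_forall_not_isLeaf_mem {S : Set V} (hS : ∀ x, ¬ IsLeaf G x → x ∈ S)
    (a b : S) : (G.induce S).dist a b = G.dist a b := by
  by_cases hr : G.Reachable a b
  · obtain ⟨p, hp, hlen⟩ := hr.exists_path_of_dist
    have hsupp : ∀ x ∈ p.support, x ∈ S := fun x hx => by
      by_cases hxa : x = a
      · exact hxa ▸ a.2
      by_cases hxb : x = b
      · exact hxb ▸ b.2
      exact hS x (hp.not_isLeaf_of_mem_support hx hxa hxb)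
    have hq : (p.induce S hsupp).length = p.length := by
      have := congrArg Walk.length (p.map_induce hsupp)
      rwa [Walk.length_map] at this
    refine le_antisymm (hlen ▸ hq ▸ dist_le _) ?_
    obtain ⟨r, hr⟩ := (p.induce S hsupp).reachable.exists_walk_length_eq_dist
    calc G.dist a b ≤ (r.map (Embedding.induce S).toHom).length := dist_le _
      _ = (G.induce S).dist a b := by rw [Walk.length_map, hr]
  · rw [dist_eq_zero_of_not_reachable hr, dist_eq_zero_of_not_reachable]
    exact fun h => hr (h.map (Embedding.induce S).toHom)

lemma grad_le {v : V} {e : ℕ} (h : ∀ u, G.dist v u ≤ e) : grad G ≤ e :=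
  Nat.sInf_le ⟨v, h⟩

lemma exists_forall_dist_le_grad [Finite V] [Nonempty V] : ∃ v, ∀ u, G.dist v u ≤ grad G := by
  obtain ⟨v⟩ := ‹Nonempty V›
  obtain ⟨u, hu⟩ := Finite.exists_max (G.dist v)
  exact Nat.sInf_mem (⟨G.dist v u, v, hu⟩ : {e : ℕ | ∃ v, ∀ u, G.dist v u ≤ e}.Nonempty)

end

theorem radius_twin_free {V : Type*} [Fintype V] (T : SimpleGraph V)
    (hT : T.IsTree) (hcard : 3 ≤ Fintype.card V) (S : Set V)
    (hS1 : ∀ u, ¬ IsLeaf T u → u ∈ S)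
    (hS2 : ∀ v, (∃ u, IsLeaf T u ∧ T.Adj u v) →
      ∃! u, IsLeaf T u ∧ T.Adj u v ∧ u ∈ S) :
    grad T = grad (T.induce S) := by
  have hc := hT.connected
  have h3 : 3 ≤ ENat.card V := by simpa [ENat.card_eq_coe_fintype_card] using hcard
  have hdist := dist_induce_of_forall_not_isLeaf_mem hS1
  have hV : Nonempty V := Fintype.card_pos_iff.mp (by omega)
  have : Nonempty S := by
    obtain ⟨v⟩ := hV
    by_cases hv : IsLeaf T v
    · obtain ⟨w, hw, -⟩ := id hv
      exact ⟨⟨w, hS1 w (hv.not_isLeaf_of_adj hc h3 hw)⟩⟩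
    · exact ⟨⟨v, hS1 v hv⟩⟩
  apply le_antisymm
  · obtain ⟨⟨v, hvS⟩, hv⟩ := exists_forall_dist_le_grad (G := T.induce S)
    obtain ⟨c, hcl, hr⟩ := exists_not_isLeaf_forall_dist_le hc h3 hS1
      (r := grad (T.induce S)) fun u hu => hdist ⟨v, hvS⟩ ⟨u, hu⟩ ▸ hv ⟨u, hu⟩
    refine grad_le (v := c) fun u => ?_
    by_cases huS : u ∈ S
    · exact hr u huS
    have hu : IsLeaf T u := not_not.mp (mt (hS1 u) huS)
    obtain ⟨w, hw, -⟩ := id hu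
    obtain ⟨u', ⟨hu', hu'w, hu'S⟩, -⟩ := hS2 w ⟨u, hu, hw⟩
    rw [hu.dist_eq_of_twin hc hu' hw hu'w (by rintro rfl; exact hcl hu)
      (by rintro rfl; exact hcl hu')]
    exact hr u' hu'S
  · obtain ⟨v, hv⟩ := exists_forall_dist_le_grad (G := T)
    obtain ⟨c, hcl, hr⟩ := exists_not_isLeaf_forall_dist_le hc h3 (A := Set.univ)
      (fun _ _ => trivial) fun u _ => hv u
    exact grad_le (v := ⟨c, hS1 c hcl⟩) fun u => hdist _ u ▸ hr u trivial
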